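/- With the dual (tilde) operators of the Langlands-dual type-C₂ representation defined in the context, the following operator identities hold on the space of all functions ℂ⁴ → ℂ: ẽ₁ ∘ f̃₂ = f̃₂ ∘ ẽ₁, ẽ₂ ∘ f̃₁ = f̃₁ ∘ ẽ₂, ẽ₁ ∘ f̃₁ − f̃₁ ∘ ẽ₁ = (q̃₁ − q̃₁⁻¹)·(K̃₁⁻¹ − K̃₁), and ẽ₂ ∘ f̃₂ − f̃₂ ∘ ẽ₂ = (q̃₂ − q̃₂⁻¹)·(K̃₂⁻¹ − K̃₂). -/
import Mathlib

set_option maxHeartbeats 2000000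


noncomputable section

open Complex

/-- The space of operators on all functions `ℂ⁴ → ℂ`. -/
abbrev OpB : Type := Module.End ℂ ((Fin 4 → ℂ) → ℂ)

/-- Weyl operator `W(ℓ,δ)`: `(W(ℓ,δ) f)(x) = exp(ℓ(x + δ/2)) · f(x + δ)`. -/
def Wop (ℓ : (Fin 4 → ℂ) → ℂ) (δ : Fin 4 → ℂ) : OpB where
  toFun f := fun x => Complex.exp (ℓ (x + (2 : ℂ)⁻¹ • δ)) * f (x + δ)
  map_add' f g := by funext x; simp [mul_add]
  map_smul' c f := by funext x; simp [smul_eq_mul]; ring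

/-- `b_s = b/√2`. -/
def bs (b : ℝ) : ℝ := b / Real.sqrt 2

/-- `q = exp(π i b²)`. -/
def qq (b : ℝ) : ℂ := Complex.exp ((Real.pi : ℂ) * Complex.I * (b : ℂ) ^ 2)

/-- `q_s = exp(π i b_s²)`. -/
def qs (b : ℝ) : ℂ := Complex.exp ((Real.pi : ℂ) * Complex.I * ((bs b : ℝ) : ℂ) ^ 2)

/-- The affine functional `ℓ_α = π (b_s (ct·t + cv·v + cl1·λ₁) + b (cu·u + cw·w + cl2·λ₂))`,
where `(t,u,v,w) = (x 0, x 1, x 2, x 3)`. -/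
def ellB (b lam1 lam2 ct cu cv cw cl1 cl2 : ℝ) : (Fin 4 → ℂ) → ℂ := fun x =>
  (Real.pi : ℂ) * (((bs b : ℝ) : ℂ) * (ct * x 0 + cv * x 2 + cl1 * lam1)
    + (b : ℂ) * (cu * x 1 + cw * x 3 + cl2 * lam2))

/-- The shift vector `δ = (−i b_s d_t, −i b d_u, −i b_s d_v, −i b d_w)`. -/
def deltaB (b dt du dv dw : ℝ) : Fin 4 → ℂ :=
  ![-Complex.I * ((bs b : ℝ) : ℂ) * dt, -Complex.I * (b : ℂ) * du,
    -Complex.I * ((bs b : ℝ) : ℂ) * dv, -Complex.I * (b : ℂ) * dw]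

/-- The operator `[α]e(d_t p_t + d_u p_u + d_v p_v + d_w p_w) = W(ℓ_α,δ) + W(−ℓ_α,δ)`. -/
def brB (b lam1 lam2 ct cu cv cw cl1 cl2 dt du dv dw : ℝ) : OpB :=
  Wop (ellB b lam1 lam2 ct cu cv cw cl1 cl2) (deltaB b dt du dv dw)
    + Wop (fun x => -(ellB b lam1 lam2 ct cu cv cw cl1 cl2 x)) (deltaB b dt du dv dw)

/-- `K₁ = W(π(b_s(2λ₁−2t−2v) + b(u+w)), 0)`. -/
def K1 (b lam1 lam2 : ℝ) : OpB := Wop (ellB b lam1 lam2 (-2) 1 (-2) 1 2 0) 0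

/-- `K₁⁻¹`, the multiplication operator with negated exponent. -/
def K1inv (b lam1 lam2 : ℝ) : OpB := Wop (ellB b lam1 lam2 2 (-1) 2 (-1) (-2) 0) 0

/-- `K₂ = W(π(b(2λ₂−2u−2w) + b_s(2t+2v)), 0)`. -/
def K2 (b lam1 lam2 : ℝ) : OpB := Wop (ellB b lam1 lam2 2 (-2) 2 (-2) 0 2) 0

/-- `K₂⁻¹`, the multiplication operator with negated exponent. -/
def K2inv (b lam1 lam2 : ℝ) : OpB := Wop (ellB b lam1 lam2 (-2) 2 (-2) 2 0 (-2)) 0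

/-- `q̃₁ = exp(π i b_s⁻²)`. -/
def qt1 (b : ℝ) : ℂ := Complex.exp ((Real.pi : ℂ) * Complex.I * (((bs b)⁻¹ : ℝ) : ℂ) ^ 2)

/-- `q̃₂ = exp(π i b⁻²)`. -/
def qt2 (b : ℝ) : ℂ := Complex.exp ((Real.pi : ℂ) * Complex.I * ((b⁻¹ : ℝ) : ℂ) ^ 2)

/-- The affine functional
`ℓ̃_α = π (b_s⁻¹ (ct·t + cv·v + cl1·λ₁) + b⁻¹ (cu·u + cw·w + cl2·λ₂))`. -/
def ellBs (b lam1 lam2 ct cu cv cw cl1 cl2 : ℝ) : (Fin 4 → ℂ) → ℂ := fun x =>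
  (Real.pi : ℂ) * ((((bs b)⁻¹ : ℝ) : ℂ) * (ct * x 0 + cv * x 2 + cl1 * lam1)
    + ((b⁻¹ : ℝ) : ℂ) * (cu * x 1 + cw * x 3 + cl2 * lam2))

/-- The starred shift vector `δ̃ = (−i b_s⁻¹ d_t, −i b⁻¹ d_u, −i b_s⁻¹ d_v, −i b⁻¹ d_w)`. -/
def deltaBs (b dt du dv dw : ℝ) : Fin 4 → ℂ :=
  ![-Complex.I * (((bs b)⁻¹ : ℝ) : ℂ) * dt, -Complex.I * ((b⁻¹ : ℝ) : ℂ) * du,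
    -Complex.I * (((bs b)⁻¹ : ℝ) : ℂ) * dv, -Complex.I * ((b⁻¹ : ℝ) : ℂ) * dw]

/-- The starred operator `[α]_*e_*(·) = W(ℓ̃_α,δ̃) + W(−ℓ̃_α,δ̃)`. -/
def brBs (b lam1 lam2 ct cu cv cw cl1 cl2 dt du dv dw : ℝ) : OpB :=
  Wop (ellBs b lam1 lam2 ct cu cv cw cl1 cl2) (deltaBs b dt du dv dw)
    + Wop (fun x => -(ellBs b lam1 lam2 ct cu cv cw cl1 cl2 x)) (deltaBs b dt du dv dw)

/-- `ẽ₁ = [2u−v]_*e_*(2p_w−p_v−2p_u) + (q̃₂+q̃₂⁻¹)[u−w]_*e_*(p_w−p_v−p_u)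
  + [v−2w]_*e_*(−p_v) + [t]_*e_*(2p_w−2p_u−p_t)`. -/
def et1 (b lam1 lam2 : ℝ) : OpB :=
  brBs b lam1 lam2 0 2 (-1) 0 0 0 0 (-2) (-1) 2
    + (qt2 b + (qt2 b)⁻¹) • brBs b lam1 lam2 0 1 0 (-1) 0 0 0 (-1) (-1) 1
    + brBs b lam1 lam2 0 0 1 (-2) 0 0 0 0 (-1) 0
    + brBs b lam1 lam2 1 0 0 0 0 0 (-1) (-2) 0 2

/-- `ẽ₂ = [w]_*e_*(−p_w)`. -/
def et2 (b lam1 lam2 : ℝ) : OpB := brBs b lam1 lam2 0 0 0 1 0 0 0 0 0 (-1)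

/-- `f̃₁ = [2λ₁−t]_*e_*(p_t) + [2λ₁−2t+2u−v]_*e_*(p_v)`. -/
def ft1 (b lam1 lam2 : ℝ) : OpB :=
  brBs b lam1 lam2 (-1) 0 0 0 2 0 1 0 0 0
    + brBs b lam1 lam2 (-2) 2 (-1) 0 2 0 0 0 1 0

/-- `f̃₂ = [2λ₂+t−u]_*e_*(p_u) + [2λ₂+t−2u+v−w]_*e_*(p_w)`. -/
def ft2 (b lam1 lam2 : ℝ) : OpB :=
  brBs b lam1 lam2 1 (-1) 0 0 0 2 0 1 0 0
    + brBs b lam1 lam2 1 (-2) 1 (-1) 0 2 0 0 0 1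

/-- `K̃₁ = W(π(b_s⁻¹(2λ₁−2t−2v) + 2b⁻¹(u+w)), 0)`. -/
def Kt1 (b lam1 lam2 : ℝ) : OpB := Wop (ellBs b lam1 lam2 (-2) 2 (-2) 2 2 0) 0

/-- `K̃₁⁻¹`, the multiplication operator with negated exponent. -/
def Kt1inv (b lam1 lam2 : ℝ) : OpB := Wop (ellBs b lam1 lam2 2 (-2) 2 (-2) (-2) 0) 0

/-- `K̃₂ = W(π(b⁻¹(2λ₂−2u−2w) + b_s⁻¹(t+v)), 0)`. -/
def Kt2 (b lam1 lam2 : ℝ) : OpB := Wop (ellBs b lam1 lam2 1 (-2) 1 (-2) 0 2) 0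

/-- `K̃₂⁻¹`, the multiplication operator with negated exponent. -/
def Kt2inv (b lam1 lam2 : ℝ) : OpB := Wop (ellBs b lam1 lam2 (-1) 2 (-1) 2 0 (-2)) 0


private lemma ellBs_neg (b l1 l2 a1 a2 a3 a4 a5 a6 : ℝ) :
    (fun x => -(ellBs b l1 l2 a1 a2 a3 a4 a5 a6 x))
      = ellBs b l1 l2 (-a1) (-a2) (-a3) (-a4) (-a5) (-a6) := by
  funext x; simp only [ellBs]; push_cast; ring

private lemma brBs_eq (b l1 l2 a1 a2 a3 a4 a5 a6 d1 d2 d3 d4 : ℝ) :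
    brBs b l1 l2 a1 a2 a3 a4 a5 a6 d1 d2 d3 d4
      = Wop (ellBs b l1 l2 a1 a2 a3 a4 a5 a6) (deltaBs b d1 d2 d3 d4)
        + Wop (ellBs b l1 l2 (-a1) (-a2) (-a3) (-a4) (-a5) (-a6)) (deltaBs b d1 d2 d3 d4) := by
  rw [brBs, ellBs_neg]

private lemma deltaBs_add (b d1 d2 d3 d4 e1 e2 e3 e4 : ℝ) :
    deltaBs b d1 d2 d3 d4 + deltaBs b e1 e2 e3 e4
      = deltaBs b (d1+e1) (d2+e2) (d3+e3) (d4+e4) := by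
  funext i
  fin_cases i <;> · simp [deltaBs]; ring

private lemma deltaBs_zero (b : ℝ) : deltaBs b 0 0 0 0 = 0 := by
  funext i; fin_cases i <;> simp [deltaBs]

private lemma Wmul (b l1 l2 a1 a2 a3 a4 a5 a6 c1 c2 c3 c4 c5 c6 d1 d2 d3 d4 e1 e2 e3 e4 : ℝ) :
    Wop (ellBs b l1 l2 a1 a2 a3 a4 a5 a6) (deltaBs b d1 d2 d3 d4)
      * Wop (ellBs b l1 l2 c1 c2 c3 c4 c5 c6) (deltaBs b e1 e2 e3 e4)
    = Complex.exp (-(Real.pi : ℂ) * Complex.I * 2⁻¹ *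
        ((((bs b)⁻¹ : ℝ) : ℂ)^2 * ((c1:ℂ)*d1 + (c3:ℂ)*d3 - (a1:ℂ)*e1 - (a3:ℂ)*e3)
          + ((b⁻¹ : ℝ) : ℂ)^2 * ((c2:ℂ)*d2 + (c4:ℂ)*d4 - (a2:ℂ)*e2 - (a4:ℂ)*e4)))
      • Wop (ellBs b l1 l2 (a1+c1) (a2+c2) (a3+c3) (a4+c4) (a5+c5) (a6+c6))
          (deltaBs b (d1+e1) (d2+e2) (d3+e3) (d4+e4)) := by
  apply LinearMap.ext; intro f
  funext x
  simp only [Module.End.mul_apply, LinearMap.smul_apply, Wop, LinearMap.coe_mk, AddHom.coe_mk,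
    Pi.smul_apply, smul_eq_mul, ← deltaBs_add b d1 d2 d3 d4 e1 e2 e3 e4, ← add_assoc]
  rw [← mul_assoc, ← mul_assoc, ← Complex.exp_add, ← Complex.exp_add]
  congr 1
  simp only [ellBs, deltaBs, Pi.add_apply, Pi.smul_apply, smul_eq_mul, Matrix.cons_val_zero,
    Matrix.cons_val_one, Matrix.head_cons, Matrix.cons_val_two, Matrix.tail_cons,
    Matrix.cons_val_three]
  push_cast
  ring

/-- the `[ẽ_i, f̃_j]` relations for the Langlands-dual type-C₂
representation. -/
theorem C2dual_ef_relations (b lam1 lam2 : ℝ) (hb0 : 0 < b) (hb1 : b < 1)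
    (hirr : Irrational (b ^ 2)) :
    et1 b lam1 lam2 * ft2 b lam1 lam2 = ft2 b lam1 lam2 * et1 b lam1 lam2 ∧
    et2 b lam1 lam2 * ft1 b lam1 lam2 = ft1 b lam1 lam2 * et2 b lam1 lam2 ∧
    et1 b lam1 lam2 * ft1 b lam1 lam2 - ft1 b lam1 lam2 * et1 b lam1 lam2
      = (qt1 b - (qt1 b)⁻¹) • (Kt1inv b lam1 lam2 - Kt1 b lam1 lam2) ∧
    et2 b lam1 lam2 * ft2 b lam1 lam2 - ft2 b lam1 lam2 * et2 b lam1 lam2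
      = (qt2 b - (qt2 b)⁻¹) • (Kt2inv b lam1 lam2 - Kt2 b lam1 lam2) := by
  have hsR : ((bs b)⁻¹ : ℝ)^2 = 2 * (b⁻¹)^2 := by
    rw [bs, inv_div, div_pow, Real.sq_sqrt (by norm_num : (0:ℝ) ≤ 2), inv_pow]
    ring
  have hs : (((bs b)⁻¹ : ℝ) : ℂ)^2 = 2 * ((b⁻¹ : ℝ) : ℂ)^2 := by exact_mod_cast hsR
  refine ⟨?_, ?_, ?_, ?_⟩
  · simp only [et1, ft2, qt2, brBs_eq, mul_add, add_mul, smul_mul_assoc, mul_smul_comm, smul_add,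
      Wmul, hs]
    norm_num
    simp only [smul_smul, add_mul, mul_add, ← Complex.exp_neg, ← Complex.exp_add, add_smul]
    norm_num [Complex.exp_zero]
    ring_nf
    module
  · simp only [et2, ft1, qt2, brBs_eq, mul_add, add_mul, smul_mul_assoc, mul_smul_comm, smul_add,
      Wmul, hs]
    norm_num
    abel
  · simp only [et1, ft1, qt1, qt2, Kt1, Kt1inv, brBs_eq, mul_add, add_mul, smul_mul_assoc,
      mul_smul_comm, smul_add, smul_sub, Wmul, hs]
    norm_num [deltaBs_zero]
    simp only [smul_smul, add_mul, mul_add, ← Complex.exp_neg, ← Complex.exp_add, add_smul,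
      deltaBs_zero]
    norm_num [Complex.exp_zero, deltaBs_zero]
    ring_nf
    module
  · simp only [et2, ft2, qt2, Kt2, Kt2inv, brBs_eq, mul_add, add_mul, smul_mul_assoc,
      mul_smul_comm, smul_add, smul_sub, Wmul, hs]
    norm_num [deltaBs_zero]
    simp only [smul_smul, add_mul, mul_add, ← Complex.exp_neg, ← Complex.exp_add, add_smul,
      deltaBs_zero]
    norm_num [Complex.exp_zero, deltaBs_zero]
    ring_nf
    module

end
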